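/- arXiv:hep-th/9603160 — 2 statements merged into one kernel-verified Lean document; each statement's English description precedes it below -/
import Mathlib

section
/- Let F : ℝ → ℝ be twice continuously differentiable with F(0) = 0, F'(0) = 0, and F''(0) = 2a for some a > 0, and let f : ℝ → ℝ be continuous with f(0) = −b for some b > 0. Then there exist ε₀ > 0 and a function ε ↦ x_ε defined for 0 < ε < ε₀ such that F(x_ε) + ε f(x_ε) = 0, x_ε > 0, and x_ε/√ε → √(b/a) as ε → 0⁺. -/
/-!
Substituting `x = t √ε`, the equation `F x + ε f x = 0` becomes
`g_ε t := F (t √ε) / ε + f (t √ε) = 0`. Since `F y / y² → a` as `y → 0⁺` (L'Hôpital),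
`g_ε t → a t² - b` uniformly for `t` in a compact subinterval of `(0, ∞)`. On `[c/2, 2c]`,
`c = √(b/a)`, this limit changes sign and vanishes only at `c`, so for small `ε` the
intermediate value theorem gives a zero `t_ε` of `g_ε` there, and by compactness any such
choice tends to `c`. Take `x_ε = t_ε √ε`.
-/

open Filter Set Topology

theorem tendsto_div_sq_nhdsGT_zero {F : ℝ → ℝ} {a : ℝ} (hF : Differentiable ℝ F)
    (hF0 : F 0 = 0) (hF1 : deriv F 0 = 0) (hF2 : HasDerivAt (deriv F) (2 * a) 0) :
    Tendsto (fun y => F y / y ^ 2) (𝓝[>] 0) (𝓝 a) := by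
  have hslope : Tendsto (fun y => deriv F y / y) (𝓝[>] 0) (𝓝 (2 * a)) := by
    have := (hasDerivAt_iff_tendsto_slope.mp hF2).mono_left (nhdsGT_le_nhdsNE 0)
    have e : slope (deriv F) 0 = fun y => deriv F y / y := by
      ext y; simp [slope_def_field, hF1]
    rwa [e] at this
  refine HasDerivAt.lhopital_zero_nhdsGT (f' := deriv F) (g' := fun y => 2 * y)
    (.of_forall fun y => (hF y).hasDerivAt) (.of_forall fun y => by simpa using hasDerivAt_pow 2 y)
    (eventually_mem_nhdsWithin.mono fun y hy => by simp [(mem_Ioi.mp hy).ne'])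
    ?_ ?_ ?_
  · simpa [hF0] using (hF.continuous.tendsto 0).mono_left nhdsWithin_le_nhds
  · simpa using ((continuous_pow 2).tendsto (0 : ℝ)).mono_left nhdsWithin_le_nhds
  · convert hslope.div_const 2 using 2 <;> ring

theorem tendstoUniformlyOn_sqrt_rescaling {F f : ℝ → ℝ} {a b p q : ℝ} (hp : 0 < p)
    (hF : Tendsto (fun y => F y / y ^ 2) (𝓝[>] 0) (𝓝 a)) (hf : Tendsto f (𝓝[>] 0) (𝓝 b)) :
    TendstoUniformlyOn (fun ε t => F (t * √ε) / ε + f (t * √ε)) (fun t => a * t ^ 2 + b)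
      (𝓝[>] 0) (Icc p q) := by
  set L := 𝓝[>] (0 : ℝ) ×ˢ 𝓟 (Icc p q)
  have hmem : ∀ᶠ z in L, 0 < z.1 ∧ z.2 ∈ Icc p q :=
    (tendsto_fst.eventually self_mem_nhdsWithin).and
      (tendsto_snd.eventually (mem_principal_self _))
  have hnorm : ∀ᶠ z in L, ‖z.2‖ ≤ q := hmem.mono fun z ⟨_, hpt, htq⟩ => by
    rwa [Real.norm_of_nonneg (hp.le.trans hpt)]
  have hsqrt : Tendsto (fun z : ℝ × ℝ => √z.1) L (𝓝 0) :=
    (Real.continuous_sqrt.tendsto' 0 0 Real.sqrt_zero).comp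
      (tendsto_fst.mono_right nhdsWithin_le_nhds)
  have hy : Tendsto (fun z : ℝ × ℝ => z.2 * √z.1) L (𝓝[>] 0) := by
    refine tendsto_nhdsWithin_iff.mpr
      ⟨isBoundedUnder_le_mul_tendsto_zero (isBoundedUnder_of_eventually_le hnorm) hsqrt, ?_⟩
    filter_upwards [hmem] with z ⟨hε, hpt, _⟩
    exact mul_pos (hp.trans_le hpt) (Real.sqrt_pos.mpr hε)
  have hbdd : IsBoundedUnder (· ≤ ·) L fun z => ‖z.2 ^ 2‖ :=
    isBoundedUnder_of_eventually_le (hnorm.mono fun z hz => by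
      rw [norm_pow]; exact pow_le_pow_left₀ (norm_nonneg _) hz 2)
  have hdiff : Tendsto (fun z : ℝ × ℝ =>
      (F (z.2 * √z.1) / (z.2 * √z.1) ^ 2 - a) * z.2 ^ 2 + (f (z.2 * √z.1) - b)) L (𝓝 0) := by
    simpa using ((tendsto_sub_nhds_zero_iff.mpr (hF.comp hy)).zero_mul_isBoundedUnder_le
      hbdd).add (tendsto_sub_nhds_zero_iff.mpr (hf.comp hy))
  rw [tendstoUniformlyOn_iff_tendsto, tendsto_uniformity_iff_dist_tendsto_zero]
  refine (hdiff.abs.congr' ?_).trans (by simp)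
  filter_upwards [hmem] with ⟨ε, t⟩ ⟨hε, hpt, _⟩
  have ht : t ≠ 0 := (hp.trans_le hpt).ne'
  have hs : √ε ^ 2 = ε := Real.sq_sqrt hε.le
  rw [Real.dist_eq, abs_sub_comm]
  -- with `y = t √ε`, `F y / ε = t² · (F y / y²)`
  congr 1
  field_simp
  rw [hs]
  ring

theorem IsCompact.tendsto_nhds_of_tendsto_comp {X Y ι : Type*} [TopologicalSpace X]
    [TopologicalSpace Y] [T2Space Y] {K : Set X} {l : Filter ι} {h : X → Y} {r : ι → X}
    {c : X} {y : Y} (hK : IsCompact K) (hh : ContinuousOn h K)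
    (hunique : ∀ t ∈ K, h t = y → t = c) (hr : ∀ᶠ i in l, r i ∈ K)
    (hhr : Tendsto (h ∘ r) l (𝓝 y)) : Tendsto r l (𝓝 c) := by
  refine hK.tendsto_nhds_of_unique_mapClusterPt hr fun t ht hclus => hunique t ht ?_
  have hclus' : MapClusterPt (h t) l (h ∘ r) :=
    hclus.tendsto_comp' ((hh t ht).mono_left (inf_le_inf_left _ (tendsto_principal.mpr hr)))
  by_contra hne
  exact (hclus'.clusterPt.mono hhr).neBot.ne (disjoint_nhds_nhds.mpr hne).eq_bot

theorem exists_zero_tendsto_of_tendstoUniformlyOn {ι : Type*} {l : Filter ι}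
    {g : ι → ℝ → ℝ} {h : ℝ → ℝ} {p q c : ℝ} (hpq : p ≤ q)
    (hg : TendstoUniformlyOn g h l (Icc p q)) (hgc : ∀ᶠ i in l, ContinuousOn (g i) (Icc p q))
    (hh : ContinuousOn h (Icc p q)) (hp : h p < 0) (hq : 0 < h q)
    (hunique : ∀ t ∈ Icc p q, h t = 0 → t = c) :
    ∃ r : ι → ℝ, (∀ᶠ i in l, r i ∈ Icc p q ∧ g i (r i) = 0) ∧ Tendsto r l (𝓝 c) := by
  have hzero : ∀ᶠ i in l, ∃ t, t ∈ Icc p q ∧ g i t = 0 := by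
    filter_upwards [hgc, (hg.tendsto_at (left_mem_Icc.mpr hpq)).eventually_lt_const hp,
      (hg.tendsto_at (right_mem_Icc.mpr hpq)).eventually_const_lt hq] with i hci hpi hqi
    exact intermediate_value_Icc hpq hci ⟨hpi.le, hqi.le⟩
  set r : ι → ℝ := fun i => Classical.epsilon fun t => t ∈ Icc p q ∧ g i t = 0
  have hr : ∀ᶠ i in l, r i ∈ Icc p q ∧ g i (r i) = 0 :=
    hzero.mono fun i => Classical.epsilon_spec
  refine ⟨r, hr,
    isCompact_Icc.tendsto_nhds_of_tendsto_comp hh hunique (hr.mono fun _ => And.left) ?_⟩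
  rw [Metric.tendstoUniformlyOn_iff] at hg
  refine Metric.tendsto_nhds.mpr fun η hη => ?_
  filter_upwards [hg η hη, hr] with i hi ⟨hri, hgri⟩
  simpa [hgri] using hi (r i) hri

theorem stmt_7 (F f : ℝ → ℝ) (a b : ℝ) (ha : 0 < a) (hb : 0 < b)
    (hF : ContDiff ℝ 2 F) (hF0 : F 0 = 0) (hF1 : deriv F 0 = 0)
    (hF2 : deriv (deriv F) 0 = 2 * a)
    (hf : Continuous f) (hf0 : f 0 = -b) :
    ∃ ε₀ > (0 : ℝ), ∃ x : ℝ → ℝ,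
      (∀ ε : ℝ, 0 < ε → ε < ε₀ → F (x ε) + ε * f (x ε) = 0 ∧ 0 < x ε) ∧
      Tendsto (fun ε : ℝ => x ε / Real.sqrt ε) (nhdsWithin 0 (Set.Ioi 0))
        (nhds (Real.sqrt (b / a))) := by
  set c := √(b / a)
  have hc : 0 < c := Real.sqrt_pos.mpr (div_pos hb ha)
  have hac : a * c ^ 2 = b := by
    rw [Real.sq_sqrt (div_pos hb ha).le]; field_simp
  have hF' : ContDiff ℝ 1 (deriv F) := hF.iterate_deriv' 1 1
  have hquot := tendsto_div_sq_nhdsGT_zero (hF.differentiable two_ne_zero) hF0 hF1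
    (hF2 ▸ (hF'.differentiable one_ne_zero 0).hasDerivAt)
  have hlim : Tendsto f (𝓝[>] 0) (𝓝 (-b)) :=
    hf0 ▸ (hf.tendsto 0).mono_left nhdsWithin_le_nhds
  obtain ⟨r, hr, hrc⟩ := exists_zero_tendsto_of_tendstoUniformlyOn (c := c)
    (by linarith : c / 2 ≤ 2 * c) (tendstoUniformlyOn_sqrt_rescaling (by positivity) hquot hlim)
    (.of_forall fun ε => by have := hF.continuous; fun_prop) (by fun_prop)
    (by nlinarith) (by nlinarith)
    fun t ht hzero => (sq_eq_sq₀ (by linarith [ht.1]) hc.le).mp (by nlinarith)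
  obtain ⟨ε₀, hε₀, hsub⟩ := mem_nhdsGT_iff_exists_Ioo_subset.mp hr
  refine ⟨ε₀, hε₀, fun ε => r ε * √ε, fun ε hε hεε₀ => ?_, ?_⟩
  · obtain ⟨⟨hrp, -⟩, hroot⟩ := hsub ⟨hε, hεε₀⟩
    refine ⟨?_, ?_⟩
    · calc F (r ε * √ε) + ε * f (r ε * √ε)
          = ε * (F (r ε * √ε) / ε + f (r ε * √ε)) := by field_simp
        _ = 0 := by rw [hroot, mul_zero]
    · exact mul_pos (by linarith) (Real.sqrt_pos.mpr hε)
  · refine hrc.congr' (eventually_mem_nhdsWithin.mono fun ε hε => ?_)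
    simp [(Real.sqrt_pos.mpr hε).ne']
end

section
/- Under the hypotheses of the preceding statement (F ∈ C², F(0)=0, F'(0)=0, F''(0)=2a>0; f continuous, f(0)=−b<0; x_ε > 0 solving F(x_ε)+εf(x_ε)=0 with x_ε/√ε → √(b/a)), one has F'(x_ε)/√ε → 2√(ab) as ε → 0⁺. -/
open Filter Topology

/-!
Since `F'(0) = 0` and `F''(0) = 2a`, the ratio `F'(y) / y` tends to `2a` as `y → 0`. Writing
`F'(x_ε) / √ε = (F'(x_ε) / x_ε) · (x_ε / √ε)` and using `x_ε / √ε → √(b/a)` (which forces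
`x_ε → 0`) gives the limit `2a · √(b/a) = 2√(ab)`.
-/

lemma HasDerivAt.tendsto_div_self {g : ℝ → ℝ} {g' : ℝ} (hg : HasDerivAt g g' 0) (hg0 : g 0 = 0) :
    Tendsto (fun y => g y / y) (𝓝[≠] 0) (𝓝 g') := by
  simpa [hg0, div_eq_inv_mul] using hasDerivAt_iff_tendsto_slope_zero.mp hg

lemma tendsto_zero_of_tendsto_div {α : Type*} {l : Filter α} {x s : α → ℝ} {c : ℝ}
    (hs : Tendsto s l (𝓝 0)) (hs0 : ∀ᶠ t in l, s t ≠ 0)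
    (hxs : Tendsto (fun t => x t / s t) l (𝓝 c)) : Tendsto x l (𝓝 0) := by
  have hmul : Tendsto (fun t => x t / s t * s t) l (𝓝 (c * 0)) := hxs.mul hs
  rw [mul_zero] at hmul
  refine hmul.congr' ?_
  filter_upwards [hs0] with t ht
  exact div_mul_cancel₀ (x t) ht

lemma HasDerivAt.tendsto_comp_div {α : Type*} {l : Filter α} {g : ℝ → ℝ} {g' c : ℝ}
    {x s : α → ℝ} (hg : HasDerivAt g g' 0) (hg0 : g 0 = 0)
    (hs : Tendsto s l (𝓝 0)) (hs0 : ∀ᶠ t in l, s t ≠ 0)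
    (hxs : Tendsto (fun t => x t / s t) l (𝓝 c)) (hx0 : ∀ᶠ t in l, x t ≠ 0) :
    Tendsto (fun t => g (x t) / s t) l (𝓝 (g' * c)) := by
  have hx : Tendsto x l (𝓝[≠] 0) :=
    tendsto_nhdsWithin_iff.mpr ⟨tendsto_zero_of_tendsto_div hs hs0 hxs, hx0⟩
  refine ((hg.tendsto_div_self hg0).comp hx |>.mul hxs).congr' ?_
  filter_upwards [hx0] with t ht
  exact div_mul_div_cancel₀ ht

lemma mul_sqrt_div_self {a : ℝ} (ha : 0 ≤ a) (b : ℝ) : a * √(b / a) = √(a * b) := by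
  rcases ha.eq_or_lt with rfl | ha
  · simp
  rw [← Real.sqrt_sq ha.le, ← Real.sqrt_mul (sq_nonneg a), Real.sqrt_sq ha.le]
  congr 1
  field_simp

theorem stmt_8_general (F f : ℝ → ℝ) (a b : ℝ) (ha : 0 < a)
    (hF : ContDiff ℝ 2 F) (hF1 : deriv F 0 = 0)
    (hF2 : deriv (deriv F) 0 = 2 * a)
    (x : ℝ → ℝ)
    (hx : ∀ ε : ℝ, 0 < ε → F (x ε) + ε * f (x ε) = 0 ∧ 0 < x ε)
    (hlim : Tendsto (fun ε : ℝ => x ε / Real.sqrt ε) (nhdsWithin 0 (Set.Ioi 0))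
      (nhds (Real.sqrt (b / a)))) :
    Tendsto (fun ε : ℝ => deriv F (x ε) / Real.sqrt ε) (nhdsWithin 0 (Set.Ioi 0))
      (nhds (2 * Real.sqrt (a * b))) := by
  have hd : HasDerivAt (deriv F) (2 * a) 0 := hF2 ▸ (hF.differentiable_deriv_two 0).hasDerivAt
  have hsqrt : Tendsto Real.sqrt (𝓝[>] 0) (𝓝 0) := by
    simpa using Real.continuous_sqrt.continuousWithinAt.tendsto (x := 0) (s := Set.Ioi 0)
  have hsqrt0 : ∀ᶠ ε in 𝓝[>] (0 : ℝ), √ε ≠ 0 := by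
    filter_upwards [self_mem_nhdsWithin] with ε hε using Real.sqrt_ne_zero'.mpr hε
  have hx0 : ∀ᶠ ε in 𝓝[>] (0 : ℝ), x ε ≠ 0 := by
    filter_upwards [self_mem_nhdsWithin] with ε hε using (hx ε hε).2.ne'
  have hlim' := hd.tendsto_comp_div hF1 hsqrt hsqrt0 hlim hx0
  rwa [mul_assoc, mul_sqrt_div_self ha.le] at hlim'

theorem stmt_8 (F f : ℝ → ℝ) (a b : ℝ) (ha : 0 < a) (hb : 0 < b)
    (hF : ContDiff ℝ 2 F) (hF0 : F 0 = 0) (hF1 : deriv F 0 = 0)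
    (hF2 : deriv (deriv F) 0 = 2 * a)
    (hf : Continuous f) (hf0 : f 0 = -b)
    (x : ℝ → ℝ)
    (hx : ∀ ε : ℝ, 0 < ε → F (x ε) + ε * f (x ε) = 0 ∧ 0 < x ε)
    (hlim : Tendsto (fun ε : ℝ => x ε / Real.sqrt ε) (nhdsWithin 0 (Set.Ioi 0))
      (nhds (Real.sqrt (b / a)))) :
    Tendsto (fun ε : ℝ => deriv F (x ε) / Real.sqrt ε) (nhdsWithin 0 (Set.Ioi 0))
      (nhds (2 * Real.sqrt (a * b))) :=
  stmt_8_general F f a b ha hF hF1 hF2 x hx hlim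
end
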